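/- Let M1 = {(x^(k), β^(k))}_{k∈{0,...,K}} be a 0-reducible AMA menu with witness set K1 (0 ∈ K1, and with F-probability 1 both the selected boosted-welfare-maximizing option with minimal β and, for every buyer i, some maximizer of ∑_{ℓ≠i} v_ℓ⋅x_ℓ^(k) + β^(k) lie in K1). Let φ1 : {0,...,K} → K1 be any map with φ1(k) = k for all k ∈ K1, and define the menu M̂1 whose k-th option is (x^(φ1(k)), β^(φ1(k))). Then for every λ ∈ [0,1], the convex combination M = λ M1 + (1−λ) M̂1 satisfies Rev(M) ≥ Rev(M1). -/

import Mathlib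

/-
On the good event some option `k₀ ∈ K₁` is selected by `M₁` at `v` and, for every buyer `i`,
some `κ i ∈ K₁` maximizes the welfare of `v₋ᵢ`. Since `φ₁` fixes these options and `M̂₁` only
reuses options of `M₁`, they are also selected in `M̂₁` and hence in every convex combination
`M` of the two. Given the selected options, the payment is an affine expression in the menu, so
`pay M v = λ pay M₁ v + (1 - λ) pay M̂₁ v = pay M₁ v` almost surely.
-/

open MeasureTheory Finset

namespace AMA

/-- An AMA menu: for each of the `K+1` option indices, an allocation
`x : Fin m → Fin n → ℝ` (buyer `i` receives `x i j` of item `j`) and a boost `β : ℝ`. -/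
abbrev Menu (m n K : ℕ) := Fin (K + 1) → (Fin m → Fin n → ℝ) × ℝ

/-- Inner product of a valuation and an allocation. -/
def dotp {n : ℕ} (v x : Fin n → ℝ) : ℝ := ∑ j, v j * x j

/-- A valid AMA menu: entries in `[0,1]`, each item allocated at most once in total,
default option `(0, 0)`. -/
def IsMenu {m n K : ℕ} (M : Menu m n K) : Prop :=
  (∀ k i j, 0 ≤ (M k).1 i j ∧ (M k).1 i j ≤ 1) ∧
  (∀ k j, ∑ i, (M k).1 i j ≤ 1) ∧ M 0 = 0

/-- The set of valuation profiles: each buyer's valuation lies in `[0,1]^n` with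
coordinate sum at most `1`. -/
def VP (m n : ℕ) : Set (Fin m → Fin n → ℝ) :=
  {v | ∀ i, (∀ j, 0 ≤ v i j ∧ v i j ≤ 1) ∧ ∑ j, v i j ≤ 1}

/-- Boosted welfare of option `k` at the valuation profile `v`. -/
def bw {m n K : ℕ} (M : Menu m n K) (v : Fin m → Fin n → ℝ) (k : Fin (K + 1)) : ℝ :=
  (∑ i, dotp (v i) ((M k).1 i)) + (M k).2

/-- Boosted welfare of option `k` at `v` when buyer `i` is omitted. -/
def bwWo {m n K : ℕ} (M : Menu m n K) (v : Fin m → Fin n → ℝ) (i : Fin m)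
    (k : Fin (K + 1)) : ℝ :=
  (∑ l ∈ Finset.univ.erase i, dotp (v l) ((M k).1 l)) + (M k).2

/-- Maximal boosted welfare `W(v)`. -/
noncomputable def W {m n K : ℕ} (M : Menu m n K) (v : Fin m → Fin n → ℝ) : ℝ :=
  Finset.univ.sup' Finset.univ_nonempty (bw M v)

/-- Maximal boosted welfare `W(v₋ᵢ)` with buyer `i` omitted. -/
noncomputable def WWo {m n K : ℕ} (M : Menu m n K) (v : Fin m → Fin n → ℝ)
    (i : Fin m) : ℝ :=
  Finset.univ.sup' Finset.univ_nonempty (bwWo M v i)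

/-- The minimal boost among boosted-welfare-maximizing options (tie-breaking in favor
of maximal total payment). -/
noncomputable def minBeta {m n K : ℕ} (M : Menu m n K) (v : Fin m → Fin n → ℝ) : ℝ :=
  sInf {b : ℝ | ∃ k, bw M v k = W M v ∧ b = (M k).2}

/-- Total payment collected at `v`:
`∑ i W(v₋ᵢ) − (m−1) W(v) − min {β k : W_k(v) = W(v)}`. -/
noncomputable def pay {m n K : ℕ} (M : Menu m n K) (v : Fin m → Fin n → ℝ) : ℝ :=
  (∑ i, WWo M v i) - ((m : ℝ) - 1) * W M v - minBeta M v

/-- Expected revenue of the AMA menu `M` under the profile distribution `F`. -/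
noncomputable def Rev {m n K : ℕ} (F : Measure (Fin m → Fin n → ℝ))
    (M : Menu m n K) : ℝ :=
  ∫ v, pay M v ∂F

/-- Option-wise convex combination of two AMA menus. -/
noncomputable def comb {m n K : ℕ} (lam : ℝ) (M M' : Menu m n K) : Menu m n K :=
  fun k => (fun i j => lam * (M k).1 i j + (1 - lam) * (M' k).1 i j,
            lam * (M k).2 + (1 - lam) * (M' k).2)

/-- The event that the option subset `K'` suffices at `v`: some boosted-welfare
maximizer with minimal boost lies in `K'`, and for every buyer `i` some maximizer of the
boosted welfare of `v₋ᵢ` lies in `K'`. -/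
def GoodEvent {m n K : ℕ} (M : Menu m n K) (K' : Finset (Fin (K + 1)))
    (v : Fin m → Fin n → ℝ) : Prop :=
  (∃ k ∈ K', bw M v k = W M v ∧ (M k).2 = minBeta M v) ∧
  ∀ i : Fin m, ∃ k ∈ K', bwWo M v i k = WWo M v i

/-- `M` is `ε`-reducible: some subset `K'` of options containing the default option, of
cardinality at most `√(K+1)`, whose good event has probability at least `1 - ε/m`. -/
def Reducible {m n K : ℕ} (F : Measure (Fin m → Fin n → ℝ)) (M : Menu m n K)
    (ε : ℝ) : Prop :=
  ∃ K' : Finset (Fin (K + 1)), 0 ∈ K' ∧ (K'.card : ℝ) ≤ Real.sqrt (K + 1) ∧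
    (F {v | GoodEvent M K' v}).toReal ≥ 1 - ε / (m : ℝ)

/-- `M₁` and `M₂` are `ε`-mode-connected by a piecewise linear path with `pieces`
linear pieces, all whose menus are valid AMA menus and have revenue at least
`min (Rev M₁) (Rev M₂) - ε`. -/
def PLConnected {m n K : ℕ} (F : Measure (Fin m → Fin n → ℝ)) (M₁ M₂ : Menu m n K)
    (ε : ℝ) (pieces : ℕ) : Prop :=
  ∃ P : Fin (pieces + 1) → Menu m n K, P 0 = M₁ ∧ P (Fin.last pieces) = M₂ ∧
    (∀ i, IsMenu (P i)) ∧
    ∀ i : Fin pieces, ∀ lam ∈ Set.Icc (0 : ℝ) 1,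
      Rev F (comb lam (P i.castSucc) (P i.succ)) ≥ min (Rev F M₁) (Rev F M₂) - ε

/-- The option selected at `v`, ties broken towards the least boost. -/
def IsOptimal {m n K : ℕ} (M : Menu m n K) (v : Fin m → Fin n → ℝ) (k : Fin (K + 1)) :
    Prop :=
  (∀ k', bw M v k' ≤ bw M v k) ∧ ∀ k', bw M v k ≤ bw M v k' → (M k).2 ≤ (M k').2

def IsOptimalWo {m n K : ℕ} (M : Menu m n K) (v : Fin m → Fin n → ℝ) (i : Fin m)
    (k : Fin (K + 1)) : Prop :=
  ∀ k', bwWo M v i k' ≤ bwWo M v i k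

lemma convexComb_le_convexComb {lam a a' b b' : ℝ} (hl0 : 0 ≤ lam) (hl1 : lam ≤ 1)
    (ha : a' ≤ a) (hb : b' ≤ b) : lam * a' + (1 - lam) * b' ≤ lam * a + (1 - lam) * b :=
  add_le_add (mul_le_mul_of_nonneg_left ha hl0) (mul_le_mul_of_nonneg_left hb (by linarith))

lemma dotp_convexComb {n : ℕ} (lam : ℝ) (v a b : Fin n → ℝ) :
    dotp v (fun j => lam * a j + (1 - lam) * b j) = lam * dotp v a + (1 - lam) * dotp v b := by
  simp only [dotp, Finset.mul_sum, ← Finset.sum_add_distrib]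
  exact Finset.sum_congr rfl fun j _ => by ring

section Menu

variable {m n K : ℕ} (M M' : Menu m n K) (v : Fin m → Fin n → ℝ)

lemma bw_comb (lam : ℝ) (k : Fin (K + 1)) :
    bw (comb lam M M') v k = lam * bw M v k + (1 - lam) * bw M' v k := by
  simp only [bw, comb, dotp_convexComb, Finset.sum_add_distrib, ← Finset.mul_sum]
  ring

lemma bwWo_comb (lam : ℝ) (i : Fin m) (k : Fin (K + 1)) :
    bwWo (comb lam M M') v i k = lam * bwWo M v i k + (1 - lam) * bwWo M' v i k := by
  simp only [bwWo, comb, dotp_convexComb, Finset.sum_add_distrib, ← Finset.mul_sum]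
  ring

lemma measurable_bw (k : Fin (K + 1)) : Measurable fun v => bw M v k := by
  unfold bw dotp
  fun_prop

lemma measurable_bwWo (i : Fin m) (k : Fin (K + 1)) : Measurable fun v => bwWo M v i k := by
  unfold bwWo dotp
  fun_prop

variable {M M' v}

lemma W_eq_of_isOptimal {k : Fin (K + 1)} (hk : IsOptimal M v k) : W M v = bw M v k :=
  le_antisymm (Finset.sup'_le _ _ fun k' _ => hk.1 k') (Finset.le_sup' _ (Finset.mem_univ k))

lemma WWo_eq_of_isOptimalWo {i : Fin m} {k : Fin (K + 1)} (hk : IsOptimalWo M v i k) :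
    WWo M v i = bwWo M v i k :=
  le_antisymm (Finset.sup'_le _ _ fun k' _ => hk k') (Finset.le_sup' _ (Finset.mem_univ k))

lemma minBeta_eq_of_isOptimal {k : Fin (K + 1)} (hk : IsOptimal M v k) :
    minBeta M v = (M k).2 := by
  refine IsLeast.csInf_eq ⟨⟨k, (W_eq_of_isOptimal hk).symm, rfl⟩, ?_⟩
  rintro b ⟨k', hk', rfl⟩
  exact hk.2 k' (hk' ▸ (W_eq_of_isOptimal hk).ge)

lemma minBeta_le {k : Fin (K + 1)} (hk : bw M v k = W M v) : minBeta M v ≤ (M k).2 := by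
  refine csInf_le ((Set.finite_range fun k => (M k).2).subset ?_).bddBelow ⟨k, hk, rfl⟩
  rintro b ⟨k', -, rfl⟩
  exact ⟨k', rfl⟩

lemma isOptimal_of_eq_W_of_eq_minBeta {k : Fin (K + 1)} (hk : bw M v k = W M v)
    (hβ : (M k).2 = minBeta M v) : IsOptimal M v k := by
  refine ⟨fun k' => hk ▸ Finset.le_sup' _ (Finset.mem_univ k'), fun k' hle => hβ ▸ ?_⟩
  exact minBeta_le (le_antisymm (Finset.le_sup' _ (Finset.mem_univ k')) (hk ▸ hle))

lemma pay_eq_of_isOptimal {k₀ : Fin (K + 1)} {κ : Fin m → Fin (K + 1)} (hk₀ : IsOptimal M v k₀)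
    (hκ : ∀ i, IsOptimalWo M v i (κ i)) :
    pay M v = ∑ i, bwWo M v i (κ i) - ((m : ℝ) - 1) * bw M v k₀ - (M k₀).2 := by
  simp only [pay, W_eq_of_isOptimal hk₀, minBeta_eq_of_isOptimal hk₀, WWo_eq_of_isOptimalWo (hκ _)]

end Menu

section Comb

variable {m n K : ℕ} {M M' : Menu m n K} {v : Fin m → Fin n → ℝ} {lam : ℝ}

lemma IsOptimal.comb (hl0 : 0 ≤ lam) (hl1 : lam ≤ 1) {k : Fin (K + 1)} (hk : IsOptimal M v k)
    (hk' : IsOptimal M' v k) : IsOptimal (comb lam M M') v k := by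
  refine ⟨fun k' => ?_, fun k' hle => ?_⟩
  · simp only [bw_comb]
    exact convexComb_le_convexComb hl0 hl1 (hk.1 k') (hk'.1 k')
  · rw [bw_comb, bw_comb] at hle
    -- a tie for the combination is a tie for each menu whose weight is positive
    have h₁ : 0 < lam → (M k).2 ≤ (M k').2 := fun hl =>
      hk.2 k' (by nlinarith [hk.1 k', hk'.1 k'])
    have h₂ : lam < 1 → (M' k).2 ≤ (M' k').2 := fun hl =>
      hk'.2 k' (by nlinarith [hk.1 k', hk'.1 k'])
    change lam * (M k).2 + (1 - lam) * (M' k).2 ≤ lam * (M k').2 + (1 - lam) * (M' k').2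
    rcases hl0.eq_or_lt with rfl | hl
    · simpa using h₂ (by norm_num)
    rcases hl1.eq_or_lt with rfl | hl'
    · simpa using h₁ hl
    exact convexComb_le_convexComb hl0 hl1 (h₁ hl) (h₂ hl')

lemma IsOptimalWo.comb (hl0 : 0 ≤ lam) (hl1 : lam ≤ 1) {i : Fin m} {k : Fin (K + 1)}
    (hk : IsOptimalWo M v i k) (hk' : IsOptimalWo M' v i k) :
    IsOptimalWo (comb lam M M') v i k := fun k' => by
  simp only [bwWo_comb]
  exact convexComb_le_convexComb hl0 hl1 (hk k') (hk' k')

lemma pay_comb (hl0 : 0 ≤ lam) (hl1 : lam ≤ 1) {k₀ : Fin (K + 1)} {κ : Fin m → Fin (K + 1)}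
    (hk₀ : IsOptimal M v k₀) (hk₀' : IsOptimal M' v k₀) (hκ : ∀ i, IsOptimalWo M v i (κ i))
    (hκ' : ∀ i, IsOptimalWo M' v i (κ i)) :
    pay (comb lam M M') v = lam * pay M v + (1 - lam) * pay M' v := by
  rw [pay_eq_of_isOptimal (hk₀.comb hl0 hl1 hk₀') fun i => (hκ i).comb hl0 hl1 (hκ' i),
    pay_eq_of_isOptimal hk₀ hκ, pay_eq_of_isOptimal hk₀' hκ']
  simp only [bw_comb, bwWo_comb, Finset.sum_add_distrib, ← Finset.mul_sum]
  change _ - _ - (lam * (M k₀).2 + (1 - lam) * (M' k₀).2) = _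
  ring

end Comb

section Reindex

variable {m n K : ℕ} {M : Menu m n K} {v : Fin m → Fin n → ℝ} {φ : Fin (K + 1) → Fin (K + 1)}

lemma IsOptimal.comp {k : Fin (K + 1)} (hk : IsOptimal M v k) (hφ : φ k = k) :
    IsOptimal (fun k => M (φ k)) v k := by
  refine ⟨fun k' => ?_, fun k' hle => ?_⟩
  · change bw M v (φ k') ≤ bw M v (φ k)
    rw [hφ]
    exact hk.1 (φ k')
  · change bw M v (φ k) ≤ bw M v (φ k') at hle
    change (M (φ k)).2 ≤ (M (φ k')).2
    rw [hφ] at hle ⊢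
    exact hk.2 _ hle

lemma IsOptimalWo.comp {i : Fin m} {k : Fin (K + 1)} (hk : IsOptimalWo M v i k)
    (hφ : φ k = k) : IsOptimalWo (fun k => M (φ k)) v i k := fun k' => by
  change bwWo M v i (φ k') ≤ bwWo M v i (φ k)
  rw [hφ]
  exact hk (φ k')

lemma pay_comp {k₀ : Fin (K + 1)} {κ : Fin m → Fin (K + 1)} (hk₀ : IsOptimal M v k₀)
    (hφk₀ : φ k₀ = k₀) (hκ : ∀ i, IsOptimalWo M v i (κ i)) (hφκ : ∀ i, φ (κ i) = κ i) :
    pay (fun k => M (φ k)) v = pay M v := by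
  rw [pay_eq_of_isOptimal (hk₀.comp hφk₀) fun i => (hκ i).comp (hφκ i),
    pay_eq_of_isOptimal hk₀ hκ]
  simp only [bw, bwWo, hφk₀, hφκ]

end Reindex

lemma measurableSet_isOptimal {m n K : ℕ} (M : Menu m n K) (K' : Finset (Fin (K + 1))) :
    MeasurableSet {v | (∃ k ∈ K', IsOptimal M v k) ∧ ∀ i, ∃ k ∈ K', IsOptimalWo M v i k} := by
  have hle {f g : (Fin m → Fin n → ℝ) → ℝ} (hf : Measurable f) (hg : Measurable g) :
      Measurable fun v => f v ≤ g v :=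
    measurableSet_setOfPred.1 (measurableSet_le hf hg)
  refine measurableSet_setOfPred.2 (.and (.exists fun k => .and measurable_const ?_)
    (.forall fun i => .exists fun k => .and measurable_const ?_))
  · exact .and (.forall fun k' => hle (measurable_bw M k') (measurable_bw M k))
      (.forall fun k' => .imp (hle (measurable_bw M k) (measurable_bw M k')) measurable_const)
  · exact .forall fun k' => hle (measurable_bwWo M i k') (measurable_bwWo M i k)

lemma ae_isOptimal_of_goodEvent {m n K : ℕ} {F : Measure (Fin m → Fin n → ℝ)}
    [IsProbabilityMeasure F] {M : Menu m n K} {K' : Finset (Fin (K + 1))}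
    (hgood : F {v | GoodEvent M K' v} = 1) :
    ∀ᵐ v ∂F, (∃ k ∈ K', IsOptimal M v k) ∧ ∀ i, ∃ k ∈ K', IsOptimalWo M v i k := by
  rw [ae_iff_measure_eq (measurableSet_isOptimal M K').nullMeasurableSet, measure_univ]
  refine le_antisymm prob_le_one (hgood ▸ measure_mono fun v ⟨⟨k, hkK, hk, hβ⟩, hWo⟩ =>
    ⟨⟨k, hkK, isOptimal_of_eq_W_of_eq_minBeta hk hβ⟩, fun i => ?_⟩)
  obtain ⟨k, hkK, hk⟩ := hWo i
  exact ⟨k, hkK, fun k' => hk ▸ Finset.le_sup' _ (Finset.mem_univ k')⟩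

theorem statement12_general {m n K : ℕ} (F : Measure (Fin m → Fin n → ℝ))
    [IsProbabilityMeasure F] (M₁ : Menu m n K) (K₁ : Finset (Fin (K + 1)))
    (hgood : F {v | GoodEvent M₁ K₁ v} = 1) (φ₁ : Fin (K + 1) → Fin (K + 1))
    (hφid : ∀ k ∈ K₁, φ₁ k = k) :
    ∀ lam ∈ Set.Icc (0 : ℝ) 1,
      Rev F (comb lam M₁ (fun k => M₁ (φ₁ k))) ≥ Rev F M₁ := by
  rintro lam ⟨hl0, hl1⟩
  refine ge_of_eq (integral_congr_ae ?_)
  filter_upwards [ae_isOptimal_of_goodEvent hgood] with v ⟨⟨k₀, hk₀K, hk₀⟩, hWo⟩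
  choose κ hκK hκ using hWo
  have hφk₀ := hφid k₀ hk₀K
  have hφκ i := hφid (κ i) (hκK i)
  rw [pay_comb hl0 hl1 hk₀ (hk₀.comp hφk₀) hκ fun i => (hκ i).comp (hφκ i),
    pay_comp hk₀ hφk₀ hκ hφκ]
  ring

/-- Let `M₁` be a `0`-reducible AMA menu with witness set `K₁`
(containing the default option, and with probability `1` the good event for `K₁`
holds).  Let `φ₁ : {0,…,K} → K₁` be any map fixing `K₁` pointwise, and let `M̂₁` be the
menu whose `k`-th option is the `φ₁ k`-th option of `M₁`.  Then every convex
combination of `M₁` and `M̂₁` has revenue at least `Rev M₁`. -/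
theorem statement12 {m n K : ℕ} (hm : 0 < m) (F : Measure (Fin m → Fin n → ℝ))
    [IsProbabilityMeasure F] (hFV : F (VP m n) = 1)
    (M₁ : Menu m n K) (hM₁ : IsMenu M₁)
    (K₁ : Finset (Fin (K + 1))) (h0 : 0 ∈ K₁)
    (hgood : F {v | GoodEvent M₁ K₁ v} = 1)
    (φ₁ : Fin (K + 1) → Fin (K + 1)) (hφmem : ∀ k, φ₁ k ∈ K₁)
    (hφid : ∀ k ∈ K₁, φ₁ k = k) :
    ∀ lam ∈ Set.Icc (0 : ℝ) 1,
      Rev F (comb lam M₁ (fun k => M₁ (φ₁ k))) ≥ Rev F M₁ :=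
  statement12_general F M₁ K₁ hgood φ₁ hφid

end AMA
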